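/- arXiv:1407.3218 — 2 statements merged into one kernel-verified Lean document; each statement's English description precedes it below -/
import Mathlib

section
/- Let g: [0,1] → ℝ be continuous and A, B ∈ ℝ. Then there exists a unique solution u of the boundary value problem Lu = g, u(0) = A, u(1) = B on [0,1], and it is given explicitly by u(x) = f(x) + ∫₀¹ K(x,y) g(y) dy, where f(x) := (B ∫₀^x e^{−Σ(y)} dy + A ∫_x^1 e^{−Σ(y)} dy) / ∫₀¹ e^{−Σ(y)} dy and K(x,y) := 1_{y ≤ x} (2 e^{Σ(y)}/σ²(y)) ∫_y^x e^{−Σ(z)} dz − 2 (∫₀^x e^{−Σ(r)} dr / ∫₀¹ e^{−Σ(r)} dr) (e^{Σ(y)}/σ²(y)) ∫_y^1 e^{−Σ(z)} dz. -/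
open Set MeasureTheory intervalIntegral

/-- A function `u ∈ C¹([a,b])` is a solution of the boundary value problem
`Lu = ℓ`, `u(a) = A`, `u(b) = B` for the second order operator `L` with generalized
drift (with data `σ` and `Σ = Sig`) if `u(a) = A`, `u(b) = B` and there is `x₁ ∈ ℝ`
such that `u'(x) = e^{−Σ(x)} (2 ∫_a^x e^{Σ(y)} ℓ(y)/σ²(y) dy + x₁)` on `[a,b]`. -/
def IsBVPSolutionLin (σ Sig : ℝ → ℝ) (a b A B : ℝ) (ℓ : ℝ → ℝ) (u : ℝ → ℝ) : Prop :=
  u a = A ∧ u b = B ∧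
  ∃ x₁ : ℝ, ∀ x ∈ Set.Icc a b,
    HasDerivWithinAt u
      (Real.exp (-(Sig x)) *
        (2 * (∫ y in a..x, Real.exp (Sig y) * ℓ y / (σ y) ^ 2) + x₁))
      (Set.Icc a b) x

/-- The kernel `K(x,y)` of Proposition P11. -/
noncomputable def Kker (σ Sig : ℝ → ℝ) (x y : ℝ) : ℝ :=
  (if y ≤ x then (2 * Real.exp (Sig y) / (σ y) ^ 2) *
      (∫ z in y..x, Real.exp (-(Sig z))) else 0)
  - 2 * ((∫ r in (0 : ℝ)..x, Real.exp (-(Sig r))) /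
        (∫ r in (0 : ℝ)..1, Real.exp (-(Sig r))))
      * (Real.exp (Sig y) / (σ y) ^ 2) * (∫ z in y..1, Real.exp (-(Sig z)))

/-- The boundary part `f(x)` of the representation formula of Proposition P11. -/
noncomputable def bndry (Sig : ℝ → ℝ) (A B x : ℝ) : ℝ :=
  (B * (∫ y in (0 : ℝ)..x, Real.exp (-(Sig y)))
    + A * (∫ y in x..(1 : ℝ), Real.exp (-(Sig y))))
  / (∫ y in (0 : ℝ)..1, Real.exp (-(Sig y)))

/-!
Integrating `u' = e^{-Σ} (2 W + x₁)`, `W(t) = ∫ₐᵗ e^Σ ℓ / σ²`, from `u(a) = A` gives a family of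
functions that is affine in `x₁`, with slope the scale function `E(x) = ∫ₐˣ e^{-Σ} > 0`; hence
exactly one `x₁` hits `u(b) = B`. For uniqueness, the difference of two solutions has
derivative `c e^{-Σ}` and vanishes at both ends, so the mean value theorem forces `c = 0`. The kernel representation comes from exchanging the order of integration over the
triangle `0 ≤ y ≤ t ≤ x`, which turns `∫₀ˣ e^{-Σ(t)} W(t) dt` into `∫₀ˣ (e^Σ ℓ / σ²)(y) ∫_yˣ e^{-Σ}`.
-/

theorem continuous_integral_left {f : ℝ → ℝ} (hf : Continuous f) (b : ℝ) :
    Continuous fun a => ∫ t in a..b, f t :=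
  (continuous_primitive (fun _ _ => hf.intervalIntegrable _ _) b).neg.congr fun a =>
    (integral_symm b a).symm

theorem integral_mul_integral_eq_integral_mul_primitive {f k : ℝ → ℝ} (hf : Continuous f)
    (hk : Continuous k) (a x : ℝ) :
    ∫ y in a..x, k y * ∫ t in y..x, f t = ∫ t in a..x, f t * ∫ s in a..t, k s := by
  have hF (y : ℝ) : HasDerivAt (fun y => ∫ t in y..x, f t) (-f y) y :=
    integral_hasDerivAt_left (hf.intervalIntegrable _ _) (hf.stronglyMeasurableAtFilter _ _)
      hf.continuousAt
  have hK (t : ℝ) : HasDerivAt (fun t => ∫ s in a..t, k s) (k t) t :=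
    (hk.integral_hasStrictDerivAt a t).hasDerivAt
  have hparts := integral_mul_deriv_eq_deriv_mul (a := a) (b := x) (fun y _ => hF y)
    (fun t _ => hK t) (hf.neg.intervalIntegrable _ _) (hk.intervalIntegrable _ _)
  simp only [integral_same, zero_mul, mul_zero, sub_zero, neg_mul,
    intervalIntegral.integral_neg, zero_sub, neg_neg] at hparts
  simpa only [mul_comm (k _)] using hparts

theorem eq_zero_of_hasDerivWithinAt_const_mul {f p : ℝ → ℝ} {a b c : ℝ} (hab : a < b)
    (hp : ∀ x, p x ≠ 0) (hf : ∀ x ∈ Icc a b, HasDerivWithinAt f (c * p x) (Icc a b) x)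
    (hfab : f a = f b) : c = 0 := by
  obtain ⟨x, hx, hslope⟩ := exists_hasDerivAt_eq_slope f (fun x => c * p x) hab
    (fun x hx => (hf x hx).continuousWithinAt)
    (fun x hx => (hf x (Ioo_subset_Icc_self hx)).hasDerivAt (Icc_mem_nhds hx.1 hx.2))
  rw [hfab, sub_self, zero_div] at hslope
  exact (mul_eq_zero.1 hslope).resolve_right (hp x)

namespace IsBVPSolutionLin

variable {σ Sig ℓ u : ℝ → ℝ} {a b A B : ℝ}

theorem congr_rhs {ℓ' : ℝ → ℝ} (hu : IsBVPSolutionLin σ Sig a b A B ℓ u)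
    (hℓ : EqOn ℓ ℓ' (Icc a b)) : IsBVPSolutionLin σ Sig a b A B ℓ' u := by
  obtain ⟨hua, hub, x₁, hu'⟩ := hu
  refine ⟨hua, hub, x₁, fun x hx => ?_⟩
  have hint : ∫ y in a..x, Real.exp (Sig y) * ℓ y / σ y ^ 2 =
      ∫ y in a..x, Real.exp (Sig y) * ℓ' y / σ y ^ 2 :=
    integral_congr fun y hy => by
      rw [uIcc_of_le hx.1] at hy
      rw [hℓ (Icc_subset_Icc_right hx.2 hy)]
  simpa only [hint] using hu' x hx

theorem eqOn {v : ℝ → ℝ} (hu : IsBVPSolutionLin σ Sig a b A B ℓ u)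
    (hv : IsBVPSolutionLin σ Sig a b A B ℓ v) : EqOn u v (Icc a b) := by
  obtain ⟨hua, hub, xu, hu'⟩ := hu
  obtain ⟨hva, hvb, xv, hv'⟩ := hv
  have hw : ∀ x ∈ Icc a b,
      HasDerivWithinAt (u - v) ((xu - xv) * Real.exp (-Sig x)) (Icc a b) x :=
    fun x hx => ((hu' x hx).sub (hv' x hx)).congr_deriv (by ring)
  rcases lt_or_ge a b with hab | hba
  · have hc : xu - xv = 0 := eq_zero_of_hasDerivWithinAt_const_mul hab
      (fun x => (Real.exp_pos _).ne') hw (by simp only [Pi.sub_apply, hua, hva, hub, hvb, sub_self])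
    have hconst := constant_of_has_deriv_right_zero (fun x hx => (hw x hx).continuousWithinAt)
      fun x hx => by
        simpa only [hc, zero_mul] using
          (hw x (Ico_subset_Icc_self hx)).mono_of_mem_nhdsWithin (Icc_mem_nhdsGE_of_mem hx)
    intro x hx
    simpa only [Pi.sub_apply, hua, hva, sub_self, sub_eq_zero] using hconst x hx
  · intro x hx
    rw [le_antisymm (hx.2.trans hba) hx.1, hua, hva]

end IsBVPSolutionLin

noncomputable def scaleFunction (Sig : ℝ → ℝ) (a x : ℝ) : ℝ :=
  ∫ t in a..x, Real.exp (-Sig t)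

noncomputable def speedIntegral (σ Sig ℓ : ℝ → ℝ) (a x : ℝ) : ℝ :=
  ∫ y in a..x, Real.exp (Sig y) * ℓ y / σ y ^ 2

noncomputable def iteratedIntegral (σ Sig ℓ : ℝ → ℝ) (a x : ℝ) : ℝ :=
  ∫ t in a..x, Real.exp (-Sig t) * speedIntegral σ Sig ℓ a t

noncomputable def shootingSolution (σ Sig ℓ : ℝ → ℝ) (a A x₁ x : ℝ) : ℝ :=
  A + ∫ t in a..x, Real.exp (-Sig t) * (2 * speedIntegral σ Sig ℓ a t + x₁)

section Solution

variable {σ Sig ℓ : ℝ → ℝ} {a A x₁ : ℝ}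

theorem scaleFunction_pos (hSig : Continuous Sig) {b : ℝ} (hab : a < b) :
    0 < scaleFunction Sig a b :=
  intervalIntegral_pos_of_pos ((Real.continuous_exp.comp hSig.neg).intervalIntegrable _ _)
    (fun _ => Real.exp_pos _) hab

theorem bndry_eq (hSig : Continuous Sig) (A B x : ℝ) :
    bndry Sig A B x = (B * scaleFunction Sig 0 x +
      A * (scaleFunction Sig 0 1 - scaleFunction Sig 0 x)) / scaleFunction Sig 0 1 := by
  have he : Continuous fun t => Real.exp (-Sig t) := Real.continuous_exp.comp hSig.neg
  rw [bndry, scaleFunction, scaleFunction,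
    integral_interval_sub_left (he.intervalIntegrable _ _) (he.intervalIntegrable _ _)]

theorem shootingSolution_self : shootingSolution σ Sig ℓ a A x₁ a = A := by
  simp [shootingSolution]

variable (hσ : Continuous σ) (hσ0 : ∀ x, σ x ≠ 0) (hSig : Continuous Sig) (hℓ : Continuous ℓ)
include hσ hσ0 hSig hℓ

theorem continuous_speedIntegrand : Continuous fun y => Real.exp (Sig y) * ℓ y / σ y ^ 2 :=
  ((Real.continuous_exp.comp hSig).mul hℓ).div (hσ.pow 2) fun y => pow_ne_zero 2 (hσ0 y)

theorem continuous_speedIntegral (a : ℝ) : Continuous (speedIntegral σ Sig ℓ a) :=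
  continuous_primitive
    (fun _ _ => (continuous_speedIntegrand hσ hσ0 hSig hℓ).intervalIntegrable _ _) a

theorem hasDerivAt_shootingSolution (x : ℝ) :
    HasDerivAt (shootingSolution σ Sig ℓ a A x₁)
      (Real.exp (-Sig x) * (2 * speedIntegral σ Sig ℓ a x + x₁)) x := by
  have hcont : Continuous fun t => Real.exp (-Sig t) * (2 * speedIntegral σ Sig ℓ a t + x₁) :=
    (Real.continuous_exp.comp hSig.neg).mul
      ((continuous_const.mul (continuous_speedIntegral hσ hσ0 hSig hℓ a)).add continuous_const)
  exact (hcont.integral_hasStrictDerivAt a x).hasDerivAt.const_add A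

theorem shootingSolution_eq (x : ℝ) :
    shootingSolution σ Sig ℓ a A x₁ x =
      A + 2 * iteratedIntegral σ Sig ℓ a x + x₁ * scaleFunction Sig a x := by
  have he : Continuous fun t => Real.exp (-Sig t) := Real.continuous_exp.comp hSig.neg
  have hW := continuous_speedIntegral hσ hσ0 hSig hℓ a
  simp only [shootingSolution, iteratedIntegral, scaleFunction, mul_add, add_assoc]
  rw [integral_add (f := fun t => Real.exp (-Sig t) * (2 * speedIntegral σ Sig ℓ a t))
    (g := fun t => Real.exp (-Sig t) * x₁)
    ((he.mul (continuous_const.mul hW)).intervalIntegrable _ _)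
    ((he.mul continuous_const).intervalIntegrable _ _), intervalIntegral.integral_mul_const,
    ← intervalIntegral.integral_const_mul]
  simp only [mul_left_comm (2 : ℝ), mul_comm x₁]

theorem isBVPSolutionLin_shootingSolution {b B : ℝ} (hab : a < b) :
    IsBVPSolutionLin σ Sig a b A B ℓ (shootingSolution σ Sig ℓ a A
      ((B - A - 2 * iteratedIntegral σ Sig ℓ a b) / scaleFunction Sig a b)) := by
  refine ⟨shootingSolution_self, ?_, _, fun x _ =>
    (hasDerivAt_shootingSolution hσ hσ0 hSig hℓ x).hasDerivWithinAt⟩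
  have hE := (scaleFunction_pos hSig hab).ne'
  rw [shootingSolution_eq hσ hσ0 hSig hℓ]
  field_simp
  ring

theorem integral_Kker_mul {x : ℝ} (hx : x ∈ Icc (0 : ℝ) 1) :
    ∫ y in (0 : ℝ)..1, Kker σ Sig x y * ℓ y =
      2 * iteratedIntegral σ Sig ℓ 0 x -
        2 * (scaleFunction Sig 0 x / scaleFunction Sig 0 1) * iteratedIntegral σ Sig ℓ 0 1 := by
  set k : ℝ → ℝ := fun y => Real.exp (Sig y) * ℓ y / σ y ^ 2
  have hk : Continuous k := continuous_speedIntegrand hσ hσ0 hSig hℓ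
  have he : Continuous fun t => Real.exp (-Sig t) := Real.continuous_exp.comp hSig.neg
  have hint (c : ℝ) : IntervalIntegrable (fun y => 2 * (k y * ∫ t in y..c, Real.exp (-Sig t)))
      volume 0 1 :=
    (continuous_const.mul (hk.mul (continuous_integral_left he c))).intervalIntegrable _ _
  have hiter (c : ℝ) : iteratedIntegral σ Sig ℓ 0 c =
      ∫ y in (0 : ℝ)..c, k y * ∫ t in y..c, Real.exp (-Sig t) :=
    (integral_mul_integral_eq_integral_mul_primitive he hk 0 c).symm
  have hsplit (y : ℝ) : Kker σ Sig x y * ℓ y =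
      {y | y ≤ x}.indicator (fun y => 2 * (k y * ∫ t in y..x, Real.exp (-Sig t))) y -
        scaleFunction Sig 0 x / scaleFunction Sig 0 1 *
          (2 * (k y * ∫ t in y..1, Real.exp (-Sig t))) := by
    simp only [Kker, indicator, mem_ofPred_eq, scaleFunction, k]
    split_ifs <;> ring
  have hIic : MeasurableSet {y : ℝ | y ≤ x} := measurableSet_Iic
  simp_rw [hsplit]
  rw [integral_sub ⟨(hint x).1.indicator hIic, (hint x).2.indicator hIic⟩
    ((hint 1).const_mul _), intervalIntegral.integral_indicator hx,
    intervalIntegral.integral_const_mul, intervalIntegral.integral_const_mul,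
    intervalIntegral.integral_const_mul, hiter, hiter]
  ring

end Solution

/-- for continuous `g : [0,1] → ℝ` and `A, B ∈ ℝ` there exists a unique
solution of the boundary value problem `Lu = g`, `u(0) = A`, `u(1) = B`, and it is given
by `u(x) = f(x) + ∫₀¹ K(x,y) g(y) dy`. -/
theorem exists_unique_solution_linear_bvp
    (σ Sig g : ℝ → ℝ) (hσ : Continuous σ) (hSig : Continuous Sig)
    (hσpos : ∀ x, 0 < σ x) (hg : ContinuousOn g (Icc (0 : ℝ) 1)) (A B : ℝ) :
    ∃ u : ℝ → ℝ, IsBVPSolutionLin σ Sig 0 1 A B g u ∧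
      (∀ x ∈ Icc (0 : ℝ) 1,
        u x = bndry Sig A B x + ∫ y in (0 : ℝ)..1, Kker σ Sig x y * g y) ∧
      ∀ v : ℝ → ℝ, IsBVPSolutionLin σ Sig 0 1 A B g v → EqOn v u (Icc (0 : ℝ) 1) := by
  set G : ℝ → ℝ := fun x => g (projIcc 0 1 zero_le_one x)
  have hG : Continuous G := hg.comp_continuous (continuous_subtype_val.comp continuous_projIcc)
    fun x => (projIcc 0 1 zero_le_one x).2
  have hGg : EqOn G g (Icc 0 1) := fun x hx => by simp only [G, projIcc_of_mem _ hx]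
  have hσ0 (x : ℝ) : σ x ≠ 0 := (hσpos x).ne'
  have hsol := (isBVPSolutionLin_shootingSolution (A := A) (B := B) hσ hσ0 hSig hG
    zero_lt_one).congr_rhs hGg
  refine ⟨_, hsol, fun x hx => ?_, fun v hv => hv.eqOn hsol⟩
  have hE := (scaleFunction_pos hSig zero_lt_one).ne'
  have hKg : ∫ y in (0 : ℝ)..1, Kker σ Sig x y * g y =
      ∫ y in (0 : ℝ)..1, Kker σ Sig x y * G y :=
    integral_congr fun y hy => by rw [uIcc_of_le zero_le_one] at hy; rw [hGg hy]
  rw [hKg, integral_Kker_mul hσ hσ0 hSig hG hx, shootingSolution_eq hσ hσ0 hSig hG,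
    bndry_eq hSig]
  field_simp
  ring
end

section
/- Let F: ℝ³ → ℝ be continuous and such that, for every compact interval K ⊂ ℝ, the restriction of (x,y,z) ↦ F(x,y,z) to K × ℝ² is Lipschitz in (y,z) uniformly in x ∈ K. Then for every x₀, x₁ ∈ ℝ there exists a unique function u ∈ C¹(ℝ) with u(0) = x₀ such that u'(x) = e^{−Σ(x)} ( 2 ∫₀^x e^{Σ(y)} F(y, u(y), u'(y))/σ²(y) dy + x₁ ) for all x ∈ ℝ; that is, the semilinear problem Lu = F(x, u, u'), u(0) = x₀, u'(0) = x₁ has a unique C¹-solution on the real line. -/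
/-!
With `w = e^Σ u'`, the integral equation says exactly that `(u, w)` is an integral curve of the
first-order system `u' = e^{-Σ} w`, `w' = 2 e^Σ F(x, u, e^{-Σ} w) / σ²` through `(x₀, x₁)`. Its
right-hand side is continuous in `x` and Lipschitz in `(u, w)`, uniformly for `x` in compact
intervals. On an interval where the Lipschitz constant is `K`, Picard-Lindelöf produces solutions
on steps of length `1 / (2K)` from any initial value, independently of the size of the solution;
chaining the steps solves the system on every compact interval, and Gronwall uniqueness patches
these solutions into a unique global one.
-/

open Set intervalIntegral

open scoped NNReal

section ProdDeriv

variable {𝕜 : Type*} [NontriviallyNormedField 𝕜] {E F : Type*} [NormedAddCommGroup E]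
  [NormedSpace 𝕜 E] [NormedAddCommGroup F] [NormedSpace 𝕜 F] {f : 𝕜 → E × F} {p : E × F} {x : 𝕜}

theorem HasDerivAt.fst (h : HasDerivAt f p x) : HasDerivAt (fun t ↦ (f t).1) p.1 x := by
  simpa using h.hasFDerivAt.fst.hasDerivAt

theorem HasDerivAt.snd (h : HasDerivAt f p x) : HasDerivAt (fun t ↦ (f t).2) p.2 x := by
  simpa using h.hasFDerivAt.snd.hasDerivAt

end ProdDeriv

section IntegralCurve

variable {E : Type*} [NormedAddCommGroup E] [NormedSpace ℝ E] {v : ℝ → E → E} {a b c : ℝ}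

theorem IsIntegralCurveOn.congr {f g : ℝ → E} {s : Set ℝ} (hf : IsIntegralCurveOn f v s)
    (hfg : EqOn g f s) : IsIntegralCurveOn g v s := fun t ht ↦ by
  rw [hfg ht]
  exact (hf t ht).congr_of_mem hfg ht

theorem IsIntegralCurveOn.piecewise_Icc {f g : ℝ → E} (hab : a ≤ b) (hbc : b ≤ c)
    (hf : IsIntegralCurveOn f v (Icc a b)) (hg : IsIntegralCurveOn g v (Icc b c))
    (hfg : f b = g b) : IsIntegralCurveOn ((Iic b).piecewise f g) v (Icc a c) := by
  classical
  set h := (Iic b).piecewise f g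
  have hleft : IsIntegralCurveOn h v (Icc a b) :=
    hf.congr fun t ht ↦ piecewise_eq_of_mem _ _ _ (mem_Iic.2 ht.2)
  have hright : IsIntegralCurveOn h v (Icc b c) := by
    refine hg.congr fun t ht ↦ ?_
    rcases ht.1.eq_or_lt with rfl | hbt
    · exact (piecewise_eq_of_mem _ _ _ (mem_Iic.2 le_rfl)).trans hfg
    · exact piecewise_eq_of_notMem _ _ _ (notMem_Iic.2 hbt)
  intro t ht
  rw [← Icc_union_Icc_eq_Icc hab hbc]
  refine HasDerivWithinAt.union ?_ ?_
  · by_cases htb : t ≤ b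
    · exact hleft t ⟨ht.1, htb⟩
    · refine HasFDerivWithinAt.of_notMem_closure ?_
      rw [isClosed_Icc.closure_eq]
      exact fun h ↦ htb h.2
  · by_cases hbt : b ≤ t
    · exact hright t ⟨hbt, ht.2⟩
    · refine HasFDerivWithinAt.of_notMem_closure ?_
      rw [isClosed_Icc.closure_eq]
      exact fun h ↦ hbt h.1

theorem IsIntegralCurveOn.eqOn_Ioo {f g : ℝ → E} {t₀ : ℝ} {K : ℝ≥0}
    (hK : ∀ t ∈ Ioo a b, LipschitzWith K (v t)) (hf : IsIntegralCurveOn f v (Ioo a b))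
    (hg : IsIntegralCurveOn g v (Ioo a b)) (ht₀ : t₀ ∈ Ioo a b) (h : f t₀ = g t₀) :
    EqOn f g (Ioo a b) :=
  ODE_solution_unique_of_mem_Ioo (s := fun _ ↦ univ) (fun t ht ↦ (hK t ht).lipschitzOnWith) ht₀
    (fun t ht ↦ ⟨(hf t ht).hasDerivAt (isOpen_Ioo.mem_nhds ht), trivial⟩)
    (fun t ht ↦ ⟨(hg t ht).hasDerivAt (isOpen_Ioo.mem_nhds ht), trivial⟩) h

theorem IsIntegralCurve.eq_of_apply_eq {f g : ℝ → E} {t₀ : ℝ}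
    (hK : ∀ a b, ∃ K : ℝ≥0, ∀ t ∈ Icc a b, LipschitzWith K (v t))
    (hf : IsIntegralCurve f v) (hg : IsIntegralCurve g v) (h : f t₀ = g t₀) : f = g := by
  funext t
  obtain ⟨K, hK⟩ := hK (min t t₀ - 1) (max t t₀ + 1)
  have ht : t ∈ Ioo (min t t₀ - 1) (max t t₀ + 1) :=
    ⟨by linarith [min_le_left t t₀], by linarith [le_max_left t t₀]⟩
  have ht₀ : t₀ ∈ Ioo (min t t₀ - 1) (max t t₀ + 1) :=
    ⟨by linarith [min_le_right t t₀], by linarith [le_max_right t t₀]⟩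
  exact (hf.isIntegralCurveOn _).eqOn_Ioo (fun t ht ↦ hK t (Ioo_subset_Icc_self ht))
    (hg.isIntegralCurveOn _) ht₀ h ht

variable [CompleteSpace E] {K : ℝ≥0}

theorem exists_isIntegralCurveOn_Icc_of_two_mul_le_one (hab : a ≤ b)
    (hKab : 2 * K * (b - a) ≤ 1) (hK : ∀ t ∈ Icc a b, LipschitzWith K (v t))
    (hv : ∀ x, ContinuousOn (v · x) (Icc a b)) (x : E) :
    ∃ γ : ℝ → E, γ a = x ∧ IsIntegralCurveOn γ v (Icc a b) := by
  obtain ⟨C, hC⟩ := isCompact_Icc.exists_bound_of_continuousOn (hv x)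
  have hC0 : 0 ≤ C := (norm_nonneg _).trans (hC a ⟨le_rfl, hab⟩)
  -- on the ball of radius `R` the field is bounded by `C + K R`, and `(C + K R) (b - a) ≤ R`
  set R : ℝ≥0 := ⟨2 * C * (b - a), by have := sub_nonneg.2 hab; positivity⟩
  have hPL : IsPicardLindelof v (⟨a, left_mem_Icc.2 hab⟩ : Icc a b) x R 0
      (⟨C, hC0⟩ + K * R) K := by
    refine ⟨fun t ht ↦ (hK t ht).lipschitzOnWith, fun y _ ↦ hv y, fun t ht y hy ↦ ?_, ?_⟩
    · calc
      ‖v t y‖ ≤ ‖v t x‖ + ‖v t y - v t x‖ := norm_le_insert' _ _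
      _ ≤ C + K * ‖y - x‖ := add_le_add (hC t ht) ((hK t ht).norm_sub_le y x)
      _ ≤ C + K * R := by gcongr; exact mem_closedBall_iff_norm.1 hy
    · change (C + K * (2 * C * (b - a))) * max (b - a) (a - a) ≤ 2 * C * (b - a) - 0
      rw [sub_self, sub_zero, max_eq_left (sub_nonneg.2 hab)]
      nlinarith [mul_nonneg hC0 (sub_nonneg.2 hab)]
  exact hPL.exists_eq_forall_mem_Icc_hasDerivWithinAt₀

theorem exists_isIntegralCurveOn_Icc_left (hab : a ≤ b)
    (hK : ∀ t ∈ Icc a b, LipschitzWith K (v t)) (hv : ∀ x, ContinuousOn (v · x) (Icc a b))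
    (x : E) : ∃ γ : ℝ → E, γ a = x ∧ IsIntegralCurveOn γ v (Icc a b) := by
  suffices ∀ n : ℕ, ∀ c ∈ Icc a b, 2 * K * (b - c) ≤ n →
      ∀ x : E, ∃ γ : ℝ → E, γ c = x ∧ IsIntegralCurveOn γ v (Icc c b) by
    obtain ⟨n, hn⟩ := exists_nat_ge (2 * K * (b - a))
    exact this n a ⟨le_rfl, hab⟩ hn x
  have hsub {c d : ℝ} (hc : c ∈ Icc a b) (hd : d ≤ b) : Icc c d ⊆ Icc a b :=
    Icc_subset_Icc hc.1 hd
  -- solve on steps of length `1 / (2 K)`, on each of which Picard-Lindelöf applies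
  have hstep {c d : ℝ} (hc : c ∈ Icc a b) (hcd : c ≤ d) (hd : d ≤ b)
      (hKcd : 2 * K * (d - c) ≤ 1) (x : E) :
      ∃ γ : ℝ → E, γ c = x ∧ IsIntegralCurveOn γ v (Icc c d) :=
    exists_isIntegralCurveOn_Icc_of_two_mul_le_one hcd hKcd (fun t ht ↦ hK t (hsub hc hd ht))
      (fun y ↦ (hv y).mono (hsub hc hd)) x
  intro n
  induction n with
  | zero =>
    intro c hc hn x
    exact hstep hc hc.2 le_rfl (by rw [Nat.cast_zero] at hn; linarith) x
  | succ n ih =>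
    intro c hc hn x
    by_cases hshort : 2 * K * (b - c) ≤ 1
    · exact hstep hc hc.2 le_rfl hshort x
    have hK0 : (0 : ℝ) < K := by
      by_contra! h
      nlinarith [K.coe_nonneg, hc.2]
    set d := c + 1 / (2 * K)
    have hKcd : 2 * K * (d - c) = 1 := by simp only [d]; field_simp; ring
    have hcd : c ≤ d := le_add_of_nonneg_right (by positivity)
    have hdb : d ≤ b := by nlinarith
    obtain ⟨γ₁, hγ₁c, hγ₁⟩ := hstep hc hcd hdb hKcd.le x
    obtain ⟨γ₂, hγ₂d, hγ₂⟩ := ih d ⟨hc.1.trans hcd, hdb⟩ (by push_cast at hn; linarith) (γ₁ d)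
    exact ⟨_, by simp [hcd, hγ₁c], hγ₁.piecewise_Icc hcd hdb hγ₂ hγ₂d.symm⟩

theorem exists_isIntegralCurveOn_Icc_right (hab : a ≤ b)
    (hK : ∀ t ∈ Icc a b, LipschitzWith K (v t)) (hv : ∀ x, ContinuousOn (v · x) (Icc a b))
    (x : E) : ∃ γ : ℝ → E, γ b = x ∧ IsIntegralCurveOn γ v (Icc a b) := by
  have hneg : MapsTo Neg.neg (Icc (-b) (-a)) (Icc a b) := fun t ht ↦
    ⟨le_neg.1 ht.2, neg_le.1 ht.1⟩
  obtain ⟨γ, hγb, hγ⟩ := exists_isIntegralCurveOn_Icc_left (v := (-1 : ℝ) • v ∘ (· * -1))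
    (neg_le_neg hab) (fun t ht ↦ by simpa using (hK _ (hneg ht)).neg)
    (fun y ↦ by
      convert ((hv y).comp continuousOn_neg hneg).neg using 1; ext t; simp) x
  refine ⟨γ ∘ (· * -1), by simpa using hγb, ?_⟩
  convert hγ.comp_mul (-1) using 1
  · ext t y; simp
  · ext t; simp [and_comm]

theorem exists_isIntegralCurveOn_Icc {t₀ : ℝ} (ht₀ : t₀ ∈ Icc a b)
    (hK : ∀ t ∈ Icc a b, LipschitzWith K (v t)) (hv : ∀ x, ContinuousOn (v · x) (Icc a b))
    (x : E) : ∃ γ : ℝ → E, γ t₀ = x ∧ IsIntegralCurveOn γ v (Icc a b) := by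
  have hleft : Icc a t₀ ⊆ Icc a b := Icc_subset_Icc_right ht₀.2
  have hright : Icc t₀ b ⊆ Icc a b := Icc_subset_Icc_left ht₀.1
  obtain ⟨γ₁, hγ₁, hγ₁v⟩ := exists_isIntegralCurveOn_Icc_right ht₀.1
    (fun t ht ↦ hK t (hleft ht)) (fun y ↦ (hv y).mono hleft) x
  obtain ⟨γ₂, hγ₂, hγ₂v⟩ := exists_isIntegralCurveOn_Icc_left ht₀.2
    (fun t ht ↦ hK t (hright ht)) (fun y ↦ (hv y).mono hright) x
  exact ⟨_, by simp [hγ₁], hγ₁v.piecewise_Icc ht₀.1 ht₀.2 hγ₂v (hγ₁.trans hγ₂.symm)⟩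

theorem exists_isIntegralCurve (hv : ∀ x, Continuous (v · x))
    (hK : ∀ a b, ∃ K : ℝ≥0, ∀ t ∈ Icc a b, LipschitzWith K (v t)) (t₀ : ℝ) (x : E) :
    ∃ γ : ℝ → E, γ t₀ = x ∧ IsIntegralCurve γ v := by
  choose! γ hγ₀ hγ using fun T (hT : 0 ≤ T) ↦ (hK (t₀ - T) (t₀ + T)).elim fun K hK ↦
    exists_isIntegralCurveOn_Icc (t₀ := t₀) ⟨by linarith, by linarith⟩ hK
      (fun y ↦ (hv y).continuousOn) x
  -- by uniqueness the local solutions `γ T` agree, so they patch to a global one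
  have hpatch : ∀ T > 0, EqOn (fun t ↦ γ (|t - t₀| + 1) t) (γ T) (Ioo (t₀ - T) (t₀ + T)) := by
    intro T hT s hs
    set m := min (|s - t₀| + 1) T
    have hm : 0 < m := lt_min (by positivity) hT
    have hsub {S : ℝ} (hS : m ≤ S) : Ioo (t₀ - m) (t₀ + m) ⊆ Icc (t₀ - S) (t₀ + S) :=
      Ioo_subset_Icc_self.trans (Icc_subset_Icc (by linarith) (by linarith))
    have ht₀ : t₀ ∈ Ioo (t₀ - m) (t₀ + m) := ⟨by linarith, by linarith⟩
    obtain ⟨K, hK⟩ := hK (t₀ - m) (t₀ + m)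
    refine ((hγ _ (by positivity)).mono (hsub (min_le_left _ _))).eqOn_Ioo
      (fun t ht ↦ hK t (Ioo_subset_Icc_self ht)) ((hγ T hT.le).mono (hsub (min_le_right _ _)))
      ht₀ ((hγ₀ _ (by positivity)).trans (hγ₀ T hT.le).symm) ?_
    have hsm : |s - t₀| < m :=
      lt_min (lt_add_one _) (abs_sub_lt_iff.2 ⟨by linarith [hs.2], by linarith [hs.1]⟩)
    exact ⟨by linarith [neg_abs_le (s - t₀)], by linarith [le_abs_self (s - t₀)]⟩
  refine ⟨fun t ↦ γ (|t - t₀| + 1) t, by simpa using hγ₀ 1 zero_le_one, fun t ↦ ?_⟩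
  set T := |t - t₀| + 1
  have ht : t ∈ Ioo (t₀ - T) (t₀ + T) := by
    constructor <;> cases abs_cases (t - t₀) <;> linarith
  have hT : 0 < T := by positivity
  exact ((hγ T hT.le).mono Ioo_subset_Icc_self).congr (hpatch T hT) t ht
    |>.hasDerivAt (isOpen_Ioo.mem_nhds ht)

theorem exists_unique_isIntegralCurve (hv : ∀ x, Continuous (v · x))
    (hK : ∀ a b, ∃ K : ℝ≥0, ∀ t ∈ Icc a b, LipschitzWith K (v t)) (t₀ : ℝ) (x : E) :
    ∃! γ : ℝ → E, γ t₀ = x ∧ IsIntegralCurve γ v :=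
  (exists_isIntegralCurve hv hK t₀ x).elim fun γ hγ ↦
    ⟨γ, hγ, fun _ hf ↦ hf.2.eq_of_apply_eq hK hγ.2 (hf.1.trans hγ.1.symm)⟩

end IntegralCurve

noncomputable def semilinearVectorField (σ Sig : ℝ → ℝ) (F : ℝ → ℝ → ℝ → ℝ) (t : ℝ)
    (p : ℝ × ℝ) : ℝ × ℝ :=
  (Real.exp (-Sig t) * p.2, 2 * (Real.exp (Sig t) * F t p.1 (Real.exp (-Sig t) * p.2) / σ t ^ 2))

def IsC1Solution (σ Sig : ℝ → ℝ) (F : ℝ → ℝ → ℝ → ℝ) (x₀ x₁ : ℝ) (u : ℝ → ℝ) : Prop :=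
  ContDiff ℝ 1 u ∧ u 0 = x₀ ∧ ∀ x : ℝ, deriv u x = Real.exp (-(Sig x)) *
    (2 * (∫ y in (0 : ℝ)..x, Real.exp (Sig y) * F y (u y) (deriv u y) / (σ y) ^ 2) + x₁)

section Semilinear

variable {σ Sig : ℝ → ℝ} {F : ℝ → ℝ → ℝ → ℝ}

theorem continuous_semilinear_integrand (hσ : Continuous σ) (hSig : Continuous Sig)
    (hσ0 : ∀ x, σ x ≠ 0) (hF : Continuous fun p : ℝ × ℝ × ℝ ↦ F p.1 p.2.1 p.2.2)
    {f g : ℝ → ℝ} (hf : Continuous f) (hg : Continuous g) :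
    Continuous fun t ↦ Real.exp (Sig t) * F t (f t) (g t) / σ t ^ 2 :=
  ((Real.continuous_exp.comp hSig).mul (hF.comp (continuous_id.prodMk (hf.prodMk hg)))).div
    (hσ.pow 2) fun t ↦ pow_ne_zero 2 (hσ0 t)

theorem continuous_semilinearVectorField (hσ : Continuous σ) (hSig : Continuous Sig)
    (hσ0 : ∀ x, σ x ≠ 0) (hF : Continuous fun p : ℝ × ℝ × ℝ ↦ F p.1 p.2.1 p.2.2) (p : ℝ × ℝ) :
    Continuous (semilinearVectorField σ Sig F · p) := by
  have hc : Continuous fun t ↦ Real.exp (-Sig t) * p.2 := by fun_prop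
  exact hc.prodMk (continuous_const.mul
    (continuous_semilinear_integrand hσ hSig hσ0 hF continuous_const hc))

theorem exists_lipschitzWith_semilinearVectorField (hσ : Continuous σ) (hSig : Continuous Sig)
    (hσ0 : ∀ x, σ x ≠ 0)
    (hLip : ∀ a b : ℝ, ∃ k : ℝ, ∀ x ∈ Icc a b, ∀ y z ytilde ztilde : ℝ,
      |F x y z - F x ytilde ztilde| ≤ k * (|y - ytilde| + |z - ztilde|)) (a b : ℝ) :
    ∃ K : ℝ≥0, ∀ t ∈ Icc a b, LipschitzWith K (semilinearVectorField σ Sig F t) := by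
  obtain ⟨k, hk⟩ := hLip a b
  have hbound {f : ℝ → ℝ} (hf : Continuous f) : ∃ M : ℝ≥0, ∀ t ∈ Icc a b, ‖f t‖₊ ≤ M :=
    (isCompact_Icc.exists_bound_of_continuousOn hf.continuousOn).elim fun M hM ↦
      ⟨M.toNNReal, fun t ht ↦ NNReal.le_toNNReal_of_coe_le (hM t ht)⟩
  obtain ⟨M₁, hM₁⟩ := hbound (f := fun t ↦ Real.exp (-Sig t)) (by fun_prop)
  obtain ⟨M₂, hM₂⟩ := hbound (f := fun t ↦ 2 * Real.exp (Sig t) / σ t ^ 2)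
    ((continuous_const.mul (Real.continuous_exp.comp hSig)).div (hσ.pow 2)
      fun t ↦ pow_ne_zero 2 (hσ0 t))
  refine ⟨max M₁ (M₂ * (2 * k.toNNReal * max 1 M₁)), fun t ht ↦ ?_⟩
  have hFt : LipschitzWith (2 * k.toNNReal) fun q : ℝ × ℝ ↦ F t q.1 q.2 := by
    refine LipschitzWith.of_dist_le_mul fun q q' ↦ ?_
    have h₁ : |q.1 - q'.1| ≤ dist q q' := (le_max_left _ _).trans_eq' (Real.dist_eq _ _).symm
    have h₂ : |q.2 - q'.2| ≤ dist q q' := (le_max_right _ _).trans_eq' (Real.dist_eq _ _).symm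
    rw [Real.dist_eq]
    calc |F t q.1 q.2 - F t q'.1 q'.2| ≤ k * (|q.1 - q'.1| + |q.2 - q'.2|) := hk t ht _ _ _ _
      _ ≤ k.toNNReal * (|q.1 - q'.1| + |q.2 - q'.2|) := by
        gcongr; exact Real.le_coe_toNNReal k
      _ ≤ _ := by push_cast; nlinarith [(k.toNNReal).coe_nonneg]
  set c := Real.exp (-Sig t)
  have hc : LipschitzWith ‖c‖₊ fun p : ℝ × ℝ ↦ c * p.2 := by
    simpa [Function.comp_def] using
      (lipschitzWith_smul c).comp (LipschitzWith.prod_snd (α := ℝ) (β := ℝ))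
  have hd := (lipschitzWith_smul (2 * Real.exp (Sig t) / σ t ^ 2)).comp
    (hFt.comp (LipschitzWith.prod_fst.prodMk hc))
  have hfield : semilinearVectorField σ Sig F t =
      fun p ↦ (c * p.2, 2 * Real.exp (Sig t) / σ t ^ 2 * F t p.1 (c * p.2)) := by
    funext p
    simp only [semilinearVectorField, c]
    congr 1
    ring
  rw [hfield]
  refine (hc.prodMk hd).weaken ?_
  gcongr
  · exact hM₁ t ht
  · exact hM₂ t ht
  · exact hM₁ t ht

theorem IsIntegralCurve.isC1Solution_fst (hσ : Continuous σ) (hSig : Continuous Sig)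
    (hσ0 : ∀ x, σ x ≠ 0) (hF : Continuous fun p : ℝ × ℝ × ℝ ↦ F p.1 p.2.1 p.2.2)
    {γ : ℝ → ℝ × ℝ} (hγ : IsIntegralCurve γ (semilinearVectorField σ Sig F)) {x₀ x₁ : ℝ}
    (hγ₀ : γ 0 = (x₀, x₁)) : IsC1Solution σ Sig F x₀ x₁ fun t ↦ (γ t).1 := by
  set u := fun t ↦ (γ t).1
  set w := fun t ↦ (γ t).2
  have hu : ∀ t, HasDerivAt u (Real.exp (-Sig t) * w t) t := fun t ↦ (hγ t).fst
  have hw : ∀ t, HasDerivAt w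
      (2 * (Real.exp (Sig t) * F t (u t) (Real.exp (-Sig t) * w t) / σ t ^ 2)) t :=
    fun t ↦ (hγ t).snd
  have hderiv : deriv u = fun t ↦ Real.exp (-Sig t) * w t := funext fun t ↦ (hu t).deriv
  have hwc : Continuous w := hγ.continuous.snd
  have huc : Continuous u := hγ.continuous.fst
  have hu'c : Continuous (deriv u) := hderiv ▸ by fun_prop
  refine ⟨contDiff_one_iff_deriv.2 ⟨fun t ↦ (hu t).differentiableAt, hu'c⟩,
    by simp [u, hγ₀], fun x ↦ ?_⟩
  have hFTC := integral_eq_sub_of_hasDerivAt (fun y _ ↦ hw y)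
    ((continuous_const.mul (continuous_semilinear_integrand hσ hSig hσ0 hF huc
      (hderiv ▸ hu'c))).intervalIntegrable 0 x)
  rw [intervalIntegral.integral_const_mul] at hFTC
  simp only [hderiv, hFTC, hγ₀, w]
  ring

theorem IsC1Solution.isIntegralCurve (hσ : Continuous σ) (hSig : Continuous Sig)
    (hσ0 : ∀ x, σ x ≠ 0) (hF : Continuous fun p : ℝ × ℝ × ℝ ↦ F p.1 p.2.1 p.2.2)
    {x₀ x₁ : ℝ} {u : ℝ → ℝ} (hu : IsC1Solution σ Sig F x₀ x₁ u) :
    IsIntegralCurve (fun t ↦ (u t,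
      2 * (∫ y in (0 : ℝ)..t, Real.exp (Sig y) * F y (u y) (deriv u y) / σ y ^ 2) + x₁))
      (semilinearVectorField σ Sig F) := by
  obtain ⟨hC1, -, hu'⟩ := hu
  have hG := continuous_semilinear_integrand hσ hSig hσ0 hF hC1.continuous
    (hC1.continuous_deriv le_rfl)
  intro t
  have := ((hC1.differentiable one_ne_zero t).hasDerivAt).prodMk
    (((hG.integral_hasStrictDerivAt 0 t).hasDerivAt.const_mul 2).add_const x₁)
  rwa [semilinearVectorField, ← hu' t]

end Semilinear

/-- if `F : ℝ³ → ℝ` is continuous and, on every compact interval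
`K × ℝ²`, Lipschitz in `(y,z)` uniformly in `x ∈ K`, then for all `x₀, x₁ ∈ ℝ` the
semilinear problem `Lu = F(x,u,u')`, `u(0) = x₀`, `u'(0) = x₁` has a unique
`C¹`-solution on the real line, i.e. there is a unique `u ∈ C¹(ℝ)` with `u(0) = x₀`
and `u'(x) = e^{−Σ(x)} (2 ∫₀^x e^{Σ(y)} F(y,u(y),u'(y))/σ²(y) dy + x₁)` for all `x`. -/
theorem semilinear_initial_value_problem_exists_unique
    (σ Sig : ℝ → ℝ) (hσ : Continuous σ) (hSig : Continuous Sig)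
    (hσpos : ∀ x, 0 < σ x)
    (F : ℝ → ℝ → ℝ → ℝ)
    (hF : Continuous fun p : ℝ × ℝ × ℝ => F p.1 p.2.1 p.2.2)
    (hLip : ∀ a b : ℝ, ∃ k : ℝ, ∀ x ∈ Icc a b, ∀ y z ytilde ztilde : ℝ,
      |F x y z - F x ytilde ztilde| ≤ k * (|y - ytilde| + |z - ztilde|))
    (x₀ x₁ : ℝ) :
    ∃! u : ℝ → ℝ, ContDiff ℝ 1 u ∧ u 0 = x₀ ∧
      ∀ x : ℝ, deriv u x = Real.exp (-(Sig x)) *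
        (2 * (∫ y in (0 : ℝ)..x,
          Real.exp (Sig y) * F y (u y) (deriv u y) / (σ y) ^ 2) + x₁) := by
  have hσ0 : ∀ x, σ x ≠ 0 := fun x ↦ (hσpos x).ne'
  obtain ⟨γ, ⟨hγ₀, hγ⟩, hγ_unique⟩ := exists_unique_isIntegralCurve
    (continuous_semilinearVectorField hσ hSig hσ0 hF)
    (exists_lipschitzWith_semilinearVectorField hσ hSig hσ0 hLip) 0 (x₀, x₁)
  refine ⟨fun t ↦ (γ t).1, hγ.isC1Solution_fst hσ hSig hσ0 hF hγ₀, fun u hu ↦ ?_⟩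
  have hcurve := hγ_unique _
    ⟨by simp [hu.2.1], IsC1Solution.isIntegralCurve hσ hSig hσ0 hF hu⟩
  funext t
  exact congrArg Prod.fst (congrFun hcurve t)
end
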